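/- arXiv:2308.15714 — 5 statements merged into one kernel-verified Lean document; each statement's English description precedes it below -/
import Mathlib

section
/- Let p ≥ 3 be odd and let G=(V,E) be a graph with edges partitioned into safe and unsafe, such that G is (p,2)-flex-connected. Let A,B be crossing (p,3)-violated sets. Then the sum of the parities of |δ(A∪B)| and |δ(A∩B)| differs from that of |δ(A\B)| and |δ(B\A)|: exactly one of the pairs {|δ(A∪B)|, |δ(A∩B)|} and {|δ(A\B)|, |δ(B\A)|} consists of numbers of the same parity as p, the other of numbers of the opposite parity. -/
open Finset

variable {V E : Type}

/-- The cut of a vertex set `S`: edges with exactly one endpoint in `S`. -/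
def cutOf [Fintype E] [DecidableEq V] (ends : E → V × V) (S : Finset V) : Finset E :=
  Finset.univ.filter (fun e => Xor ((ends e).1 ∈ S) ((ends e).2 ∈ S))

/-- Edges with one endpoint in `X` and the other in `Y`. -/
def btw [Fintype E] [DecidableEq V] (ends : E → V × V) (X Y : Finset V) : Finset E :=
  Finset.univ.filter (fun e =>
    ((ends e).1 ∈ X ∧ (ends e).2 ∈ Y) ∨ ((ends e).1 ∈ Y ∧ (ends e).2 ∈ X))

/-- `A` and `B` cross. -/
def crosses [Fintype V] [DecidableEq V] (A B : Finset V) : Prop :=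
  (A \ B).Nonempty ∧ (A ∩ B).Nonempty ∧ (B \ A).Nonempty ∧ ((A ∪ B)ᶜ).Nonempty

/-- `(p,2)`-flex-connectivity: after removing any at most 2 unsafe edges,
every nonempty proper cut has at least `p` edges. -/
def flexConn [Fintype V] [Fintype E] [DecidableEq V] [DecidableEq E]
    (p : ℕ) (ends : E → V × V) (U : Finset E) : Prop :=
  ∀ F ⊆ U, F.card ≤ 2 → ∀ S : Finset V, S.Nonempty → S ≠ Finset.univ →
    p ≤ (cutOf ends S \ F).card

/-- A `(p,3)`-violated set: its cut has exactly `p+2` edges, at least 3 unsafe. -/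
def violatedSet [Fintype E] [DecidableEq V] [DecidableEq E]
    (p : ℕ) (ends : E → V × V) (U : Finset E) (S : Finset V) : Prop :=
  (cutOf ends S).card = p + 2 ∧ 3 ≤ (cutOf ends S ∩ U).card

instance [Fintype E] [DecidableEq V] [DecidableEq E]
    (p : ℕ) (ends : E → V × V) (U : Finset E) (S : Finset V) :
    Decidable (violatedSet p ends U S) := by unfold violatedSet; infer_instance

/-- `A` amenably crosses `B`. -/
def amenablyCrosses [Fintype V] [Fintype E] [DecidableEq V] [DecidableEq E]
    (ends : E → V × V) (U : Finset E) (A B : Finset V) : Prop :=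
  crosses A B ∧
    (btw ends (A ∩ B) (B \ A) ∩ U = ∅ ∨ btw ends (A \ B) (A ∪ B)ᶜ ∩ U = ∅)

/-! The map `S ↦ δ(S)` turns symmetric differences of vertex sets into symmetric
differences of edge sets, so `|δ(S)| mod 2` is additive under `∆`. Since
`(A ∪ B) ∆ (A ∩ B) = (A \ B) ∆ (B \ A) = A ∆ B` and `|δ(A)| = |δ(B)| = p + 2`, each of the
two pairs consists of cuts of equal parity; and `(A ∪ B) ∆ (A \ B) = B` has a cut of odd
size `p + 2`, so the two pairs have opposite parities. -/

open scoped symmDiff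

theorem Finset.card_symmDiff_add_two_mul_card_inter {α : Type*} [DecidableEq α]
    (s t : Finset α) : #(s ∆ t) + 2 * #(s ∩ t) = #s + #t := by
  have hsub : s ∩ t ⊆ s ∪ t := inter_subset_left.trans subset_union_left
  rw [symmDiff_eq_sup_sdiff_inf, sup_eq_union, inf_eq_inter, card_sdiff_of_subset hsub,
    ← card_union_add_card_inter s t]
  have := card_le_card hsub
  omega

section Cut

variable [Fintype E] [DecidableEq V] [DecidableEq E] (ends : E → V × V)

theorem cutOf_symmDiff (X Y : Finset V) :
    cutOf ends (X ∆ Y) = cutOf ends X ∆ cutOf ends Y := by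
  ext e
  simp only [cutOf, mem_filter, mem_univ, true_and, mem_symmDiff, xor_def]
  tauto

theorem card_cutOf_symmDiff_mod_two (X Y : Finset V) :
    #(cutOf ends (X ∆ Y)) % 2 = (#(cutOf ends X) + #(cutOf ends Y)) % 2 := by
  have := card_symmDiff_add_two_mul_card_inter (cutOf ends X) (cutOf ends Y)
  rw [cutOf_symmDiff]
  omega

theorem card_cutOf_union_add_inter_mod_two (X Y : Finset V) :
    (#(cutOf ends (X ∪ Y)) + #(cutOf ends (X ∩ Y))) % 2 =
      (#(cutOf ends X) + #(cutOf ends Y)) % 2 := by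
  have hXY : (X ∪ Y) ∆ (X ∩ Y) = X ∆ Y := by
    ext v; simp only [mem_symmDiff, mem_union, mem_inter]; tauto
  rw [← card_cutOf_symmDiff_mod_two, ← card_cutOf_symmDiff_mod_two, hXY]

theorem card_cutOf_sdiff_add_sdiff_mod_two (X Y : Finset V) :
    (#(cutOf ends (X \ Y)) + #(cutOf ends (Y \ X))) % 2 =
      (#(cutOf ends X) + #(cutOf ends Y)) % 2 := by
  have hXY : (X \ Y) ∆ (Y \ X) = X ∆ Y := by
    ext v; simp only [mem_symmDiff, mem_sdiff]; tauto
  rw [← card_cutOf_symmDiff_mod_two, ← card_cutOf_symmDiff_mod_two, hXY]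

theorem card_cutOf_union_add_sdiff_mod_two (X Y : Finset V) :
    (#(cutOf ends (X ∪ Y)) + #(cutOf ends (X \ Y))) % 2 = #(cutOf ends Y) % 2 := by
  have hXY : (X ∪ Y) ∆ (X \ Y) = Y := by
    ext v; simp only [mem_symmDiff, mem_union, mem_sdiff]; tauto
  rw [← card_cutOf_symmDiff_mod_two, hXY]

end Cut

theorem stmt5_general [Fintype E] [DecidableEq V] [DecidableEq E]
    (p : ℕ) (hodd : Odd p) (ends : E → V × V) (U : Finset E)
    (A B : Finset V)
    (hA : violatedSet p ends U A) (hB : violatedSet p ends U B) :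
    ((cutOf ends (A ∪ B)).card % 2 = p % 2 ∧ (cutOf ends (A ∩ B)).card % 2 = p % 2 ∧
      (cutOf ends (A \ B)).card % 2 ≠ p % 2 ∧ (cutOf ends (B \ A)).card % 2 ≠ p % 2) ∨
    ((cutOf ends (A ∪ B)).card % 2 ≠ p % 2 ∧ (cutOf ends (A ∩ B)).card % 2 ≠ p % 2 ∧
      (cutOf ends (A \ B)).card % 2 = p % 2 ∧ (cutOf ends (B \ A)).card % 2 = p % 2) := by
  have hp : p % 2 = 1 := Nat.odd_iff.mp hodd
  have hunion_inter := card_cutOf_union_add_inter_mod_two ends A B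
  have hsdiff := card_cutOf_sdiff_add_sdiff_mod_two ends A B
  have hunion_sdiff := card_cutOf_union_add_sdiff_mod_two ends A B
  rw [hA.1, hB.1] at hunion_inter hsdiff
  rw [hB.1] at hunion_sdiff
  omega

theorem stmt5 [Fintype V] [Fintype E] [DecidableEq V] [DecidableEq E]
    (p : ℕ) (hp : 3 ≤ p) (hodd : Odd p) (ends : E → V × V) (U : Finset E)
    (hflex : flexConn p ends U) (A B : Finset V)
    (hA : violatedSet p ends U A) (hB : violatedSet p ends U B)
    (hcross : crosses A B) :
    ((cutOf ends (A ∪ B)).card % 2 = p % 2 ∧ (cutOf ends (A ∩ B)).card % 2 = p % 2 ∧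
      (cutOf ends (A \ B)).card % 2 ≠ p % 2 ∧ (cutOf ends (B \ A)).card % 2 ≠ p % 2) ∨
    ((cutOf ends (A ∪ B)).card % 2 ≠ p % 2 ∧ (cutOf ends (A ∩ B)).card % 2 ≠ p % 2 ∧
      (cutOf ends (A \ B)).card % 2 = p % 2 ∧ (cutOf ends (B \ A)).card % 2 = p % 2) :=
  stmt5_general p hodd ends U A B hA hB
end

section
/- Let p ≥ 2 be even and let G=(V,E) be a (p,2)-flex-connected graph with unsafe edge set U. If A and B are crossing (p,3)-violated sets, then each of the four corner cuts δ(A∪B), δ(A∩B), δ(A\B), δ(B\A) has cardinality in {p, p+2, p+4}, and at most one of them has cardinality exactly p. -/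
open Finset

variable {V E : Type}

/-!
Write `a, b, c, d` for the cut sizes of `A ∪ B, A ∩ B, A \ B, B \ A`. These four sets are
nonempty and proper, so each of `a, b, c, d` is at least `p`, and a cut of size `< p + k`
(`k ≤ 2`) has fewer than `k` unsafe edges. Modularity `a + b + 2 |E(A \ B, B \ A)| = |δA| + |δB|`,
its posimodular analogue for `c + d`, and `b + c ≡ |δA| (mod 2)` bound every corner by `p + 4`
and make all four corners congruent mod 2. The cuts of each of the pairs `(a, c), (b, c), (a, d),
(b, d)` cover `δA` or `δB`, which have three unsafe edges, so one cut of the pair has size at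
least `p + 2`; this excludes odd corners and two corners of size `p` in such a pair. For the pairs
`(a, b)` and `(c, d)` the cover also needs the at most two edges of the (posi)modularity defect,
which still forces one cut of the pair above `p`.
-/

section Cuts

variable [Fintype E] [DecidableEq V] (ends : E → V × V) (A B : Finset V)

lemma card_cutOf_union_add_card_cutOf_inter :
    (cutOf ends (A ∪ B)).card + (cutOf ends (A ∩ B)).card
        + 2 * (_root_.btw ends (A \ B) (B \ A)).card
      = (cutOf ends A).card + (cutOf ends B).card := by
  simp only [cutOf, _root_.btw, card_filter, mul_sum, ← sum_add_distrib]
  refine sum_congr rfl fun e _ => ?_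
  by_cases h1 : (ends e).1 ∈ A <;> by_cases h2 : (ends e).1 ∈ B <;>
    by_cases h3 : (ends e).2 ∈ A <;> by_cases h4 : (ends e).2 ∈ B <;> simp [Xor, *]

lemma card_cutOf_sdiff_add_card_cutOf_sdiff [Fintype V] :
    (cutOf ends (A \ B)).card + (cutOf ends (B \ A)).card
        + 2 * (_root_.btw ends (A ∩ B) (A ∪ B)ᶜ).card
      = (cutOf ends A).card + (cutOf ends B).card := by
  simp only [cutOf, _root_.btw, card_filter, mul_sum, ← sum_add_distrib]
  refine sum_congr rfl fun e _ => ?_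
  by_cases h1 : (ends e).1 ∈ A <;> by_cases h2 : (ends e).1 ∈ B <;>
    by_cases h3 : (ends e).2 ∈ A <;> by_cases h4 : (ends e).2 ∈ B <;> simp [Xor, *]

lemma card_cutOf_inter_add_card_cutOf_sdiff :
    (cutOf ends (A ∩ B)).card + (cutOf ends (A \ B)).card
      = (cutOf ends A).card + 2 * (_root_.btw ends (A ∩ B) (A \ B)).card := by
  simp only [cutOf, _root_.btw, card_filter, mul_sum, ← sum_add_distrib]
  refine sum_congr rfl fun e _ => ?_
  by_cases h1 : (ends e).1 ∈ A <;> by_cases h2 : (ends e).1 ∈ B <;>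
    by_cases h3 : (ends e).2 ∈ A <;> by_cases h4 : (ends e).2 ∈ B <;> simp [Xor, *]

lemma mem_cutOf {S : Finset V} {e : E} :
    e ∈ cutOf ends S ↔ Xor ((ends e).1 ∈ S) ((ends e).2 ∈ S) := by
  simp [cutOf]

lemma mem_btw {X Y : Finset V} {e : E} :
    e ∈ _root_.btw ends X Y ↔
      ((ends e).1 ∈ X ∧ (ends e).2 ∈ Y) ∨ ((ends e).1 ∈ Y ∧ (ends e).2 ∈ X) := by
  simp [_root_.btw]

variable [DecidableEq E]

lemma cutOf_subset_cutOf_union_union_cutOf_sdiff :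
    cutOf ends B ⊆ cutOf ends (A ∪ B) ∪ cutOf ends (A \ B) := by
  intro e
  simp only [mem_union, mem_cutOf, mem_sdiff, Xor]
  grind

lemma cutOf_subset_cutOf_inter_union_cutOf_sdiff :
    cutOf ends A ⊆ cutOf ends (A ∩ B) ∪ cutOf ends (A \ B) := by
  intro e
  simp only [mem_union, mem_cutOf, mem_inter, mem_sdiff, Xor]
  grind

lemma cutOf_subset_cutOf_union_union_cutOf_inter_union_btw :
    cutOf ends A ⊆
      cutOf ends (A ∪ B) ∪ cutOf ends (A ∩ B) ∪ _root_.btw ends (A \ B) (B \ A) := by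
  intro e
  simp only [mem_union, mem_cutOf, mem_inter, mem_sdiff, mem_btw, Xor]
  grind

lemma cutOf_subset_cutOf_sdiff_union_cutOf_sdiff_union_btw [Fintype V] :
    cutOf ends A ⊆
      cutOf ends (A \ B) ∪ cutOf ends (B \ A) ∪ _root_.btw ends (A ∩ B) (A ∪ B)ᶜ := by
  intro e
  simp only [mem_union, mem_cutOf, mem_inter, mem_sdiff, mem_compl, mem_btw, Xor]
  grind

end Cuts

lemma card_inter_le_of_subset_union_union {α : Type*} [DecidableEq α] {X Y Z W : Finset α}
    (h : X ⊆ Y ∪ Z ∪ W) (U : Finset α) :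
    (X ∩ U).card ≤ (Y ∩ U).card + (Z ∩ U).card + W.card :=
  calc (X ∩ U).card
      ≤ (Y ∩ U ∪ Z ∩ U ∪ W).card := card_le_card fun e he => by
        obtain ⟨hX, hU⟩ := mem_inter.mp he
        have := h hX
        simp only [mem_union, mem_inter] at this ⊢
        tauto
    _ ≤ (Y ∩ U).card + (Z ∩ U).card + W.card :=
        (card_union_le _ _).trans (Nat.add_le_add_right (card_union_le _ _) _)

lemma crosses.nonempty_ne_univ [Fintype V] [DecidableEq V] {A B : Finset V}
    (h : crosses A B) :
    ((A ∪ B).Nonempty ∧ A ∪ B ≠ univ) ∧ ((A ∩ B).Nonempty ∧ A ∩ B ≠ univ) ∧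
      ((A \ B).Nonempty ∧ A \ B ≠ univ) ∧ ((B \ A).Nonempty ∧ B \ A ≠ univ) := by
  obtain ⟨⟨x, hx⟩, ⟨y, hy⟩, ⟨z, hz⟩, ⟨w, hw⟩⟩ := h
  have ne_univ {X : Finset V} {v : V} (hv : v ∉ X) : X ≠ univ := fun hX => hv (hX ▸ mem_univ v)
  refine ⟨⟨⟨y, ?_⟩, ne_univ (v := w) ?_⟩, ⟨⟨y, ?_⟩, ne_univ (v := w) ?_⟩,
    ⟨⟨x, ?_⟩, ne_univ (v := z) ?_⟩, ⟨⟨z, ?_⟩, ne_univ (v := x) ?_⟩⟩ <;> simp_all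

namespace flexConn

variable [Fintype V] [Fintype E] [DecidableEq V] [DecidableEq E] {p : ℕ} {ends : E → V × V}
  {U : Finset E} {S X Y : Finset V}

lemma le_card_cutOf (hflex : flexConn p ends U) (hS : S.Nonempty) (hS' : S ≠ univ) :
    p ≤ (cutOf ends S).card := by
  simpa using hflex ∅ (empty_subset U) (by simp) S hS hS'

lemma card_cutOf_inter_lt (hflex : flexConn p ends U) (hS : S.Nonempty) (hS' : S ≠ univ)
    {k : ℕ} (hk : k ≤ 2) (hcard : (cutOf ends S).card < p + k) :
    (cutOf ends S ∩ U).card < k := by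
  by_contra! hU
  obtain ⟨F, hF, hFcard⟩ := exists_subset_card_eq hU
  have hFcut : F ⊆ cutOf ends S := hF.trans inter_subset_left
  have := hflex F (hF.trans inter_subset_right) (by omega) S hS hS'
  rw [card_sdiff_of_subset hFcut] at this
  have := card_le_card hFcut
  omega

lemma add_le_card_cutOf_or (hflex : flexConn p ends U) (hX : X.Nonempty) (hX' : X ≠ univ)
    (hY : Y.Nonempty) (hY' : Y ≠ univ) {W : Finset E}
    (hcover : cutOf ends S ⊆ cutOf ends X ∪ cutOf ends Y ∪ W)
    (hS : 3 ≤ (cutOf ends S ∩ U).card) {k : ℕ} (hk : 2 * k + W.card ≤ 4) :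
    p + k ≤ (cutOf ends X).card ∨ p + k ≤ (cutOf ends Y).card := by
  by_contra! h
  have hXU := hflex.card_cutOf_inter_lt hX hX' (by omega) h.1
  have hYU := hflex.card_cutOf_inter_lt hY hY' (by omega) h.2
  have := card_inter_le_of_subset_union_union hcover U
  omega

lemma add_two_le_card_cutOf_or (hflex : flexConn p ends U) (hX : X.Nonempty) (hX' : X ≠ univ)
    (hY : Y.Nonempty) (hY' : Y ≠ univ) (hcover : cutOf ends S ⊆ cutOf ends X ∪ cutOf ends Y)
    (hS : 3 ≤ (cutOf ends S ∩ U).card) :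
    p + 2 ≤ (cutOf ends X).card ∨ p + 2 ≤ (cutOf ends Y).card :=
  hflex.add_le_card_cutOf_or hX hX' hY hY' (W := ∅) (hcover.trans subset_union_left) hS (by simp)

end flexConn

theorem stmt6_general [Fintype V] [Fintype E] [DecidableEq V] [DecidableEq E]
    (p : ℕ) (heven : Even p) (ends : E → V × V) (U : Finset E)
    (hflex : flexConn p ends U) (A B : Finset V)
    (hA : violatedSet p ends U A) (hB : violatedSet p ends U B)
    (hcross : crosses A B) :
    ((cutOf ends (A ∪ B)).card ∈ ({p, p + 2, p + 4} : Set ℕ)) ∧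
    ((cutOf ends (A ∩ B)).card ∈ ({p, p + 2, p + 4} : Set ℕ)) ∧
    ((cutOf ends (A \ B)).card ∈ ({p, p + 2, p + 4} : Set ℕ)) ∧
    ((cutOf ends (B \ A)).card ∈ ({p, p + 2, p + 4} : Set ℕ)) ∧
    ((if (cutOf ends (A ∪ B)).card = p then 1 else 0) +
      (if (cutOf ends (A ∩ B)).card = p then 1 else 0) +
      (if (cutOf ends (A \ B)).card = p then 1 else 0) +
      (if (cutOf ends (B \ A)).card = p then 1 else 0) : ℕ) ≤ 1 := by
  obtain ⟨hA, hAU⟩ := hA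
  obtain ⟨hB, hBU⟩ := hB
  obtain ⟨⟨h₁, h₁'⟩, ⟨h₂, h₂'⟩, ⟨h₃, h₃'⟩, ⟨h₄, h₄'⟩⟩ := hcross.nonempty_ne_univ
  have l₁ := hflex.le_card_cutOf h₁ h₁'
  have l₂ := hflex.le_card_cutOf h₂ h₂'
  have l₃ := hflex.le_card_cutOf h₃ h₃'
  have l₄ := hflex.le_card_cutOf h₄ h₄'
  have modular := card_cutOf_union_add_card_cutOf_inter ends A B
  have posimodular := card_cutOf_sdiff_add_card_cutOf_sdiff ends A B
  have parity := card_cutOf_inter_add_card_cutOf_sdiff ends A B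
  have s₁₃ := hflex.add_two_le_card_cutOf_or h₁ h₁' h₃ h₃'
    (cutOf_subset_cutOf_union_union_cutOf_sdiff ends A B) hBU
  have s₂₃ := hflex.add_two_le_card_cutOf_or h₂ h₂' h₃ h₃'
    (cutOf_subset_cutOf_inter_union_cutOf_sdiff ends A B) hAU
  have s₁₄ := hflex.add_two_le_card_cutOf_or h₁ h₁' h₄ h₄'
    (union_comm B A ▸ cutOf_subset_cutOf_union_union_cutOf_sdiff ends B A) hAU
  have s₂₄ := hflex.add_two_le_card_cutOf_or h₂ h₂' h₄ h₄'
    (inter_comm B A ▸ cutOf_subset_cutOf_inter_union_cutOf_sdiff ends B A) hBU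
  have s₁₂ := hflex.add_le_card_cutOf_or (k := 1) h₁ h₁' h₂ h₂'
    (cutOf_subset_cutOf_union_union_cutOf_inter_union_btw ends A B) hAU (by omega)
  have s₃₄ := hflex.add_le_card_cutOf_or (k := 1) h₃ h₃' h₄ h₄'
    (cutOf_subset_cutOf_sdiff_union_cutOf_sdiff_union_btw ends A B) hAU (by omega)
  obtain ⟨m, rfl⟩ := heven
  have union_even : (cutOf ends (A ∪ B)).card % 2 = 0 := by omega
  simp only [Set.mem_insert_iff, Set.mem_singleton_iff]
  refine ⟨by omega, by omega, by omega, by omega, ?_⟩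
  split_ifs <;> omega

theorem stmt6 [Fintype V] [Fintype E] [DecidableEq V] [DecidableEq E]
    (p : ℕ) (hp : 2 ≤ p) (heven : Even p) (ends : E → V × V) (U : Finset E)
    (hflex : flexConn p ends U) (A B : Finset V)
    (hA : violatedSet p ends U A) (hB : violatedSet p ends U B)
    (hcross : crosses A B) :
    ((cutOf ends (A ∪ B)).card ∈ ({p, p + 2, p + 4} : Set ℕ)) ∧
    ((cutOf ends (A ∩ B)).card ∈ ({p, p + 2, p + 4} : Set ℕ)) ∧
    ((cutOf ends (A \ B)).card ∈ ({p, p + 2, p + 4} : Set ℕ)) ∧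
    ((cutOf ends (B \ A)).card ∈ ({p, p + 2, p + 4} : Set ℕ)) ∧
    ((if (cutOf ends (A ∪ B)).card = p then 1 else 0) +
      (if (cutOf ends (A ∩ B)).card = p then 1 else 0) +
      (if (cutOf ends (A \ B)).card = p then 1 else 0) +
      (if (cutOf ends (B \ A)).card = p then 1 else 0) : ℕ) ≤ 1 :=
  stmt6_general p heven ends U hflex A B hA hB hcross
end

section
/- Let p ≥ 3 be odd and G=(V,E) a (p,2)-flex-connected graph with unsafe edge set U. If A and B are crossing (p,3)-violated sets, then the four corner cuts δ(A∪B), δ(A∩B), δ(A\B), δ(B\A) have cardinalities p+1, p+2, p+2, p+3 in some order. -/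
open Finset

variable {V E : Type}

/-!
Submodularity and posimodularity of the cut function give `d(A ∪ B) + d(A ∩ B) ≤ 2p + 4` and
`d(A \ B) + d(B \ A) ≤ 2p + 4`. Flex-connectivity forces a corner cut carrying two unsafe edges to
have size at least `p + 2`; since `δ(A)` and `δ(B)` carry three unsafe edges each, a pigeonhole
argument makes both corners of one opposite pair at least `p + 2`, hence exactly `p + 2`.
Replacing `B` by `Bᶜ` permutes the corners and swaps the two opposite pairs, so we may take this
pair to be `A ∪ B, A ∩ B`. As `p` is odd, parity makes `d(A \ B)` and `d(B \ A)` even, so both are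
at least `p + 1`, with sum `2p + 4 - 2 d(A ∩ B, (A ∪ B)ᶜ)`. They cannot both be `p + 1`: each would
carry at most one unsafe edge, and the six unsafe edges of `δ(A)`, `δ(B)` would then need at
least two edges between `A ∩ B` and `(A ∪ B)ᶜ`. So they are `p + 1` and `p + 3`.
-/

theorem Finset.compl_sdiff_eq_compl_union [Fintype V] [DecidableEq V] (X Y : Finset V) :
    Yᶜ \ X = (X ∪ Y)ᶜ := by
  rw [sdiff_eq_inter_compl, ← compl_union, union_comm]

section Cuts

variable [Fintype E] [DecidableEq V] (ends : E → V × V)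

theorem cutOf_empty : cutOf ends (∅ : Finset V) = ∅ := by
  ext e; simp [cutOf]

theorem cutOf_compl [Fintype V] (S : Finset V) : cutOf ends Sᶜ = cutOf ends S := by
  ext e; simp only [cutOf, mem_filter, mem_univ, true_and, mem_compl, xor_not_not]

theorem cutOf_union_compl [Fintype V] (X Y : Finset V) :
    cutOf ends (X ∪ Yᶜ) = cutOf ends (Y \ X) := by
  rw [← cutOf_compl ends (Y \ X), sdiff_eq_inter_compl, compl_inter, compl_compl, union_comm]

theorem card_cutOf_inter_add_card_cutOf_inter [DecidableEq E] (W : Finset E) (X Y : Finset V) :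
    (cutOf ends X ∩ W).card + (cutOf ends Y ∩ W).card =
      (cutOf ends (X ∪ Y) ∩ W).card + (cutOf ends (X ∩ Y) ∩ W).card +
        2 * (btw ends (X \ Y) (Y \ X) ∩ W).card := by
  simp only [cutOf, _root_.btw, filter_inter, univ_inter, card_filter, ← sum_add_distrib, mul_sum]
  refine sum_congr rfl fun e _ => ?_
  by_cases h1 : (ends e).1 ∈ X <;> by_cases h2 : (ends e).1 ∈ Y <;>
    by_cases h3 : (ends e).2 ∈ X <;> by_cases h4 : (ends e).2 ∈ Y <;>
    simp [h1, h2, h3, h4]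

theorem card_cutOf_add_card_cutOf_of_disjoint [DecidableEq E] {X Y : Finset V} (h : Disjoint X Y) :
    (cutOf ends X).card + (cutOf ends Y).card =
      (cutOf ends (X ∪ Y)).card + 2 * (btw ends X Y).card := by
  simpa [disjoint_iff_inter_eq_empty.mp h, h.sdiff_eq_left, h.sdiff_eq_right, cutOf_empty]
    using card_cutOf_inter_add_card_cutOf_inter ends univ X Y

theorem card_cutOf_inter_add_card_cutOf_inter_eq_sdiff [Fintype V] [DecidableEq E] (W : Finset E)
    (X Y : Finset V) :
    (cutOf ends X ∩ W).card + (cutOf ends Y ∩ W).card =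
      (cutOf ends (X \ Y) ∩ W).card + (cutOf ends (Y \ X) ∩ W).card +
        2 * (btw ends (X ∩ Y) (X ∪ Y)ᶜ ∩ W).card := by
  have key := card_cutOf_inter_add_card_cutOf_inter ends W X Yᶜ
  rwa [cutOf_compl, cutOf_union_compl, ← sdiff_eq_inter_compl, sdiff_compl, inf_eq_inter,
    compl_sdiff_eq_compl_union, add_comm (cutOf ends (Y \ X) ∩ W).card] at key

theorem cutOf_subset_cutOf_inter_union_cutOf_sdiff_s10 [DecidableEq E] (X Y : Finset V) :
    cutOf ends X ⊆ cutOf ends (X ∩ Y) ∪ cutOf ends (X \ Y) := by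
  intro e he
  simp only [cutOf, mem_filter, mem_univ, true_and, mem_union, mem_inter, mem_sdiff] at he ⊢
  unfold Xor at he ⊢
  tauto

theorem cutOf_subset_cutOf_union_union_cutOf_sdiff_s10 [DecidableEq E] (X Y : Finset V) :
    cutOf ends X ⊆ cutOf ends (X ∪ Y) ∪ cutOf ends (Y \ X) := by
  intro e he
  simp only [cutOf, mem_filter, mem_univ, true_and, mem_union, mem_sdiff] at he ⊢
  unfold Xor at he ⊢
  tauto

def cornerCuts [Fintype V] (A B : Finset V) : Multiset ℕ :=
  {(cutOf ends (A ∪ B)).card, (cutOf ends (A ∩ B)).card,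
    (cutOf ends (A \ B)).card, (cutOf ends (B \ A)).card}

theorem cornerCuts_compl_right [Fintype V] (A B : Finset V) :
    cornerCuts ends A Bᶜ = cornerCuts ends A B := by
  rw [cornerCuts, cornerCuts, cutOf_union_compl, ← sdiff_eq_inter_compl, sdiff_compl, inf_eq_inter,
    compl_sdiff_eq_compl_union, cutOf_compl]
  simp only [Multiset.insert_eq_cons, ← Multiset.singleton_add]
  abel

end Cuts

section Crossing

variable [Fintype V] [DecidableEq V] {A B : Finset V}

theorem crosses.compl_right (h : crosses A B) : crosses A Bᶜ := by
  obtain ⟨hAB, hAiB, hBA, hout⟩ := h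
  refine ⟨?_, ?_, ?_, ?_⟩
  · rwa [sdiff_compl]
  · rwa [← sdiff_eq_inter_compl]
  · rwa [compl_sdiff_eq_compl_union]
  · rwa [compl_union, compl_compl, inter_comm, ← sdiff_eq_inter_compl]

theorem crosses.corner_nonempty_ne_univ (h : crosses A B) {S : Finset V}
    (hS : S = A ∪ B ∨ S = A ∩ B ∨ S = A \ B ∨ S = B \ A) : S.Nonempty ∧ S ≠ univ := by
  obtain ⟨hAB, hAiB, hBA, hout⟩ := h
  have ne_univ {T : Finset V} (x : V) (hx : x ∉ T) : T ≠ univ := fun hT => hx (hT ▸ mem_univ x)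
  obtain ⟨x, hx⟩ := hAiB
  obtain ⟨y, hy⟩ := hAB
  obtain ⟨z, hz⟩ := hout
  rcases hS with rfl | rfl | rfl | rfl
  · exact ⟨⟨x, mem_union_left _ (mem_inter.mp hx).1⟩, ne_univ z (mem_compl.mp hz)⟩
  · exact ⟨⟨x, hx⟩, ne_univ y fun hy' => (mem_sdiff.mp hy).2 (mem_inter.mp hy').2⟩
  · exact ⟨⟨y, hy⟩, ne_univ x fun hx' => (mem_sdiff.mp hx').2 (mem_inter.mp hx).2⟩
  · exact ⟨hBA, ne_univ x fun hx' => (mem_sdiff.mp hx').2 (mem_inter.mp hx).1⟩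

end Crossing

section FlexConnected

variable [Fintype V] [Fintype E] [DecidableEq V] [DecidableEq E] {p : ℕ} {ends : E → V × V}
  {U : Finset E} {A B : Finset V}

theorem violatedSet.compl {S : Finset V} (h : violatedSet p ends U S) :
    violatedSet p ends U Sᶜ := by
  rwa [violatedSet, cutOf_compl]

theorem flexConn.add_le_card_cutOf (hflex : flexConn p ends U) {S : Finset V}
    (hS : S.Nonempty) (hSu : S ≠ univ) {k : ℕ} (hk : k ≤ 2) (hkU : k ≤ (cutOf ends S ∩ U).card) :
    p + k ≤ (cutOf ends S).card := by
  obtain ⟨F, hF, rfl⟩ := exists_subset_card_eq hkU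
  have hFcut : F ⊆ cutOf ends S := hF.trans inter_subset_left
  have := hflex F (hF.trans inter_subset_right) hk S hS hSu
  rw [card_sdiff_of_subset hFcut] at this
  have := card_le_card hFcut
  omega

theorem flexConn.le_card_corner (hflex : flexConn p ends U) {S : Finset V}
    (hcross : crosses A B) (hS : S = A ∪ B ∨ S = A ∩ B ∨ S = A \ B ∨ S = B \ A) :
    p ≤ (cutOf ends S).card ∧ (2 ≤ (cutOf ends S ∩ U).card → p + 2 ≤ (cutOf ends S).card) := by
  obtain ⟨hne, hnu⟩ := hcross.corner_nonempty_ne_univ hS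
  exact ⟨hflex.add_le_card_cutOf hne hnu (k := 0) (by omega) (Nat.zero_le _),
    hflex.add_le_card_cutOf hne hnu le_rfl⟩

theorem violatedSet.add_two_le_or_of_subset (hflex : flexConn p ends U) {S X Y : Finset V}
    (hS : violatedSet p ends U S) (hX : X.Nonempty ∧ X ≠ univ) (hY : Y.Nonempty ∧ Y ≠ univ)
    (hsub : cutOf ends S ⊆ cutOf ends X ∪ cutOf ends Y) :
    p + 2 ≤ (cutOf ends X).card ∨ p + 2 ≤ (cutOf ends Y).card := by
  have hU : (cutOf ends S ∩ U).card ≤ (cutOf ends X ∩ U).card + (cutOf ends Y ∩ U).card :=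
    calc (cutOf ends S ∩ U).card
        ≤ (cutOf ends X ∩ U ∪ cutOf ends Y ∩ U).card := by
          rw [← union_inter_distrib_right]; exact card_le_card (inter_subset_inter_right hsub)
      _ ≤ _ := card_union_le _ _
  rcases le_or_gt 2 (cutOf ends X ∩ U).card with h | h
  · exact .inl (hflex.add_le_card_cutOf hX.1 hX.2 le_rfl h)
  · exact .inr (hflex.add_le_card_cutOf hY.1 hY.2 le_rfl (by have := hS.2; omega))

/-- `δ(A)` and `δ(B)` are each covered by two corner cuts in two ways, so the large corners cover
the four edges of the cycle `A ∩ B, A \ B, A ∪ B, B \ A`. -/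
theorem crosses.add_two_le_union_inter_or_sdiff (hcross : crosses A B) (hflex : flexConn p ends U)
    (hA : violatedSet p ends U A) (hB : violatedSet p ends U B) :
    (p + 2 ≤ (cutOf ends (A ∪ B)).card ∧ p + 2 ≤ (cutOf ends (A ∩ B)).card) ∨
      (p + 2 ≤ (cutOf ends (A \ B)).card ∧ p + 2 ≤ (cutOf ends (B \ A)).card) := by
  have hu := hcross.corner_nonempty_ne_univ (S := A ∪ B) (by simp)
  have hi := hcross.corner_nonempty_ne_univ (S := A ∩ B) (by simp)
  have hd := hcross.corner_nonempty_ne_univ (S := A \ B) (by simp)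
  have hd' := hcross.corner_nonempty_ne_univ (S := B \ A) (by simp)
  have h₁ := hA.add_two_le_or_of_subset hflex hi hd
    (cutOf_subset_cutOf_inter_union_cutOf_sdiff_s10 ends A B)
  have h₂ := hA.add_two_le_or_of_subset hflex hu hd'
    (cutOf_subset_cutOf_union_union_cutOf_sdiff_s10 ends A B)
  have h₃ := hB.add_two_le_or_of_subset hflex hi hd'
    (inter_comm A B ▸ cutOf_subset_cutOf_inter_union_cutOf_sdiff_s10 ends B A)
  have h₄ := hB.add_two_le_or_of_subset hflex hu hd
    (union_comm A B ▸ cutOf_subset_cutOf_union_union_cutOf_sdiff_s10 ends B A)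
  tauto

theorem cornerCuts_eq_of_add_two_le (hodd : Odd p) (hflex : flexConn p ends U)
    (hA : violatedSet p ends U A) (hB : violatedSet p ends U B) (hcross : crosses A B)
    (hun : p + 2 ≤ (cutOf ends (A ∪ B)).card) (hin : p + 2 ≤ (cutOf ends (A ∩ B)).card) :
    cornerCuts ends A B = {p + 1, p + 2, p + 2, p + 3} := by
  obtain ⟨hAcard, hAU⟩ := hA
  obtain ⟨hBcard, hBU⟩ := hB
  have hsubmod := card_cutOf_inter_add_card_cutOf_inter ends univ A B
  have hposmod := card_cutOf_inter_add_card_cutOf_inter_eq_sdiff ends univ A B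
  have hposmodU := card_cutOf_inter_add_card_cutOf_inter_eq_sdiff ends U A B
  simp only [inter_univ] at hsubmod hposmod
  have hunsafe := card_le_card (inter_subset_left (s₁ := btw ends (A ∩ B) (A ∪ B)ᶜ) (s₂ := U))
  have hparA := card_cutOf_add_card_cutOf_of_disjoint ends (disjoint_sdiff_inter A B)
  have hparB := card_cutOf_add_card_cutOf_of_disjoint ends (disjoint_sdiff_inter B A)
  rw [sdiff_union_inter] at hparA hparB
  rw [inter_comm B A] at hparB
  obtain ⟨hAB, hABU⟩ := hflex.le_card_corner hcross (S := A \ B) (by simp)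
  obtain ⟨hBA, hBAU⟩ := hflex.le_card_corner hcross (S := B \ A) (by simp)
  obtain ⟨k, rfl⟩ := hodd
  have : (cutOf ends (A ∪ B)).card = 2 * k + 3 ∧ (cutOf ends (A ∩ B)).card = 2 * k + 3 ∧
      ((cutOf ends (A \ B)).card = 2 * k + 2 ∧ (cutOf ends (B \ A)).card = 2 * k + 4 ∨
        (cutOf ends (A \ B)).card = 2 * k + 4 ∧ (cutOf ends (B \ A)).card = 2 * k + 2) := by
    omega
  obtain ⟨ha, hb, ⟨hc, hd⟩ | ⟨hc, hd⟩⟩ := this <;>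
  · rw [cornerCuts, ha, hb, hc, hd]
    simp only [Multiset.insert_eq_cons, ← Multiset.singleton_add]
    abel

end FlexConnected

theorem stmt10_general [Fintype V] [Fintype E] [DecidableEq V] [DecidableEq E]
    (p : ℕ) (hodd : Odd p) (ends : E → V × V) (U : Finset E)
    (hflex : flexConn p ends U) (A B : Finset V)
    (hA : violatedSet p ends U A) (hB : violatedSet p ends U B)
    (hcross : crosses A B) :
    ({(cutOf ends (A ∪ B)).card, (cutOf ends (A ∩ B)).card,
      (cutOf ends (A \ B)).card, (cutOf ends (B \ A)).card} : Multiset ℕ) =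
      {p + 1, p + 2, p + 2, p + 3} := by
  change cornerCuts ends A B = _
  rcases hcross.add_two_le_union_inter_or_sdiff hflex hA hB with ⟨hun, hin⟩ | ⟨hAB, hBA⟩
  · exact cornerCuts_eq_of_add_two_le hodd hflex hA hB hcross hun hin
  · rw [← cornerCuts_compl_right]
    exact cornerCuts_eq_of_add_two_le hodd hflex hA hB.compl hcross.compl_right
      (by rwa [cutOf_union_compl]) (by rwa [← sdiff_eq_inter_compl])

theorem stmt10 [Fintype V] [Fintype E] [DecidableEq V] [DecidableEq E]
    (p : ℕ) (hp : 3 ≤ p) (hodd : Odd p) (ends : E → V × V) (U : Finset E)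
    (hflex : flexConn p ends U) (A B : Finset V)
    (hA : violatedSet p ends U A) (hB : violatedSet p ends U B)
    (hcross : crosses A B) :
    ({(cutOf ends (A ∪ B)).card, (cutOf ends (A ∩ B)).card,
      (cutOf ends (A \ B)).card, (cutOf ends (B \ A)).card} : Multiset ℕ) =
      {p + 1, p + 2, p + 2, p + 3} :=
  stmt10_general p hodd ends U hflex A B hA hB hcross
end

section
/- Let p ≥ 3 and let G=(V,E) be a (p,2)-flex-connected graph with unsafe edge set U. Let A,B,C be (p,3)-violated sets and suppose D₁,D₂,D₃,D₄ ⊆ V satisfy the multiset identity δ(A) + δ(B) + δ(C) = δ(D₁) + δ(D₂) + δ(D₃) + δ(D₄) (each edge counted with multiplicity on both sides). Then at least one of D₁,D₂,D₃,D₄ is empty or equal to V (i.e., has empty cut). -/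
open Finset

variable {V E : Type}

/-!
Summing the identity over all edges and over the unsafe edges, the four cuts `δ(Dᵢ)` have total
size `3(p+2)` and carry at least `9` unsafe edges. If every `Dᵢ` were nontrivial, flex-connectivity
would give `|δ(Dᵢ)| ≥ p + min(uᵢ, 2)`, with `uᵢ` the number of unsafe edges in `δ(Dᵢ)`. So the
total excess `Σ (|δ(Dᵢ)| - p) = 6 - p` is at most `6`; a cut of excess below `2` has at most its
excess of unsafe edges, and a short case count then leaves fewer than `9` unsafe edges.
-/

lemma card_inter_add_eq_of_indicator_add_eq [DecidableEq E] {a b c d₁ d₂ d₃ d₄ : Finset E}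
    (h : ∀ e : E,
      ((if e ∈ a then 1 else 0) + (if e ∈ b then 1 else 0) + (if e ∈ c then 1 else 0) : ℕ) =
      (if e ∈ d₁ then 1 else 0) + (if e ∈ d₂ then 1 else 0) +
        (if e ∈ d₃ then 1 else 0) + (if e ∈ d₄ then 1 else 0))
    (T : Finset E) :
    #(a ∩ T) + #(b ∩ T) + #(c ∩ T) = #(d₁ ∩ T) + #(d₂ ∩ T) + #(d₃ ∩ T) + #(d₄ ∩ T) := by
  have hsum := Finset.sum_congr (s₁ := T) rfl fun e _ => h e
  simpa only [sum_add_distrib, sum_boole, filter_mem_eq_inter, Nat.cast_id, inter_comm T]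
    using hsum

lemma add_min_card_inter_le_card_cutOf [Fintype V] [Fintype E] [DecidableEq V] [DecidableEq E]
    {p : ℕ} {ends : E → V × V} {U : Finset E} (hflex : flexConn p ends U)
    {S : Finset V} (hne : S.Nonempty) (hnu : S ≠ univ) :
    p + min #(cutOf ends S ∩ U) 2 ≤ #(cutOf ends S) := by
  obtain ⟨F, hFsub, hFcard⟩ :=
    exists_subset_card_eq (s := cutOf ends S ∩ U) (min_le_left _ 2)
  have hFcut : F ⊆ cutOf ends S := hFsub.trans inter_subset_left
  have hp := hflex F (hFsub.trans inter_subset_right) (hFcard ▸ min_le_right _ _) S hne hnu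
  rw [card_sdiff_of_subset hFcut] at hp
  have := card_le_card hFcut
  omega

lemma unsafe_sum_lt_nine {p c₁ c₂ c₃ c₄ u₁ u₂ u₃ u₄ : ℕ}
    (hc : c₁ + c₂ + c₃ + c₄ = 3 * (p + 2))
    (h₁ : p + min u₁ 2 ≤ c₁) (h₂ : p + min u₂ 2 ≤ c₂)
    (h₃ : p + min u₃ 2 ≤ c₃) (h₄ : p + min u₄ 2 ≤ c₄)
    (hu₁ : u₁ ≤ c₁) (hu₂ : u₂ ≤ c₂) (hu₃ : u₃ ≤ c₃) (hu₄ : u₄ ≤ c₄) :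
    u₁ + u₂ + u₃ + u₄ < 9 := by
  omega

theorem stmt12_general [Fintype V] [Fintype E] [DecidableEq V] [DecidableEq E]
    (p : ℕ) (ends : E → V × V) (U : Finset E)
    (hflex : flexConn p ends U) (A B C : Finset V)
    (hA : violatedSet p ends U A) (hB : violatedSet p ends U B)
    (hC : violatedSet p ends U C) (D₁ D₂ D₃ D₄ : Finset V)
    (hmul : ∀ e : E,
      ((if e ∈ cutOf ends A then 1 else 0) + (if e ∈ cutOf ends B then 1 else 0) +
        (if e ∈ cutOf ends C then 1 else 0) : ℕ) =
      (if e ∈ cutOf ends D₁ then 1 else 0) + (if e ∈ cutOf ends D₂ then 1 else 0) +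
        (if e ∈ cutOf ends D₃ then 1 else 0) + (if e ∈ cutOf ends D₄ then 1 else 0)) :
    (D₁ = ∅ ∨ D₁ = Finset.univ) ∨ (D₂ = ∅ ∨ D₂ = Finset.univ) ∨
    (D₃ = ∅ ∨ D₃ = Finset.univ) ∨ (D₄ = ∅ ∨ D₄ = Finset.univ) := by
  by_contra! hD
  obtain ⟨⟨h₁e, h₁u⟩, ⟨h₂e, h₂u⟩, ⟨h₃e, h₃u⟩, ⟨h₄e, h₄u⟩⟩ := hD
  have hcard := card_inter_add_eq_of_indicator_add_eq hmul univ
  have hunsafe := card_inter_add_eq_of_indicator_add_eq hmul U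
  simp only [inter_univ] at hcard
  have hbound {S : Finset V} := add_min_card_inter_le_card_cutOf (S := S) hflex
  have hsub (S : Finset V) : #(cutOf ends S ∩ U) ≤ #(cutOf ends S) :=
    card_le_card inter_subset_left
  have hlt := unsafe_sum_lt_nine (by rw [← hcard, hA.1, hB.1, hC.1]; ring)
    (hbound h₁e h₁u) (hbound h₂e h₂u) (hbound h₃e h₃u) (hbound h₄e h₄u)
    (hsub D₁) (hsub D₂) (hsub D₃) (hsub D₄)
  linarith [hA.2, hB.2, hC.2]

theorem stmt12 [Fintype V] [Fintype E] [DecidableEq V] [DecidableEq E]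
    (p : ℕ) (hp : 3 ≤ p) (ends : E → V × V) (U : Finset E)
    (hflex : flexConn p ends U) (A B C : Finset V)
    (hA : violatedSet p ends U A) (hB : violatedSet p ends U B)
    (hC : violatedSet p ends U C) (D₁ D₂ D₃ D₄ : Finset V)
    (hmul : ∀ e : E,
      ((if e ∈ cutOf ends A then 1 else 0) + (if e ∈ cutOf ends B then 1 else 0) +
        (if e ∈ cutOf ends C then 1 else 0) : ℕ) =
      (if e ∈ cutOf ends D₁ then 1 else 0) + (if e ∈ cutOf ends D₂ then 1 else 0) +
        (if e ∈ cutOf ends D₃ then 1 else 0) + (if e ∈ cutOf ends D₄ then 1 else 0)) :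
    (D₁ = ∅ ∨ D₁ = Finset.univ) ∨ (D₂ = ∅ ∨ D₂ = Finset.univ) ∨
    (D₃ = ∅ ∨ D₃ = Finset.univ) ∨ (D₄ = ∅ ∨ D₄ = Finset.univ) :=
  stmt12_general p ends U hflex A B C hA hB hC D₁ D₂ D₃ D₄ hmul
end

section
/- Let G=(V,E) be a graph in which every nonempty proper subset S satisfies |δ(S)| ≥ p, and let A,B ⊆ V be crossing sets with |δ(A)| = |δ(B)| = p+2 such that |δ(A∪B)| = |δ(A∩B)| = |δ(A\B)| = |δ(B\A)| = p+2. Then |E(A\B,B\A)| = |E(A∩B, V\(A∪B))| = 0 and |E(A∩B,A\B)| = |E(A∩B,B\A)| = |E(A\B,V\(A∪B))| = |E(B\A,V\(A∪B))| = (p+2)/2. -/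
open Finset

variable {V E : Type}

/-! For disjoint `X`, `Y` one has `|δ(X ∪ Y)| + 2 |E(X, Y)| = |δ X| + |δ Y|`. Write
`I = A ∩ B`, `P = A \ B`, `Q = B \ A`, `W = (A ∪ B)ᶜ`. Each of the pairs `(I, P)`, `(I, Q)`,
`(P, W)`, `(Q, W)`, `(A, Q)`, `(A, W)` consists of two of the six given sets (with `δ W = δ (A ∪ B)`)
whose union is again one of them or the complement of one (`A`, `B`, `Bᶜ`, `Aᶜ`, `A ∪ B`, `Qᶜ`),
so twice the number of edges between them is `p + 2`. Since `E(A, Q) = E(I, Q) ⊔ E(P, Q)` and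
`E(A, W) = E(I, W) ⊔ E(P, W)`, the diagonal classes `E(P, Q)` and `E(I, W)` are empty. -/

section Cuts

variable [Fintype E] [DecidableEq V] (ends : E → V × V)

theorem card_btw_union_left {X Y Z : Finset V} (hXY : Disjoint X Y)
    (hZ : Disjoint (X ∪ Y) Z) :
    (btw ends (X ∪ Y) Z).card = (btw ends X Z).card + (btw ends Y Z).card := by
  simp only [_root_.btw, card_filter, ← sum_add_distrib]
  refine sum_congr rfl fun e _ => ?_
  have hXY := disjoint_left.mp hXY
  have hZ := disjoint_left.mp hZ
  simp only [mem_union] at hZ ⊢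
  by_cases h1X : (ends e).1 ∈ X <;> by_cases h1Y : (ends e).1 ∈ Y <;>
    by_cases h2X : (ends e).2 ∈ X <;> by_cases h2Y : (ends e).2 ∈ Y <;>
    simp_all

theorem card_cutOf_union_add_two_mul_card_btw {X Y : Finset V} (hXY : Disjoint X Y) :
    (cutOf ends (X ∪ Y)).card + 2 * (btw ends X Y).card =
      (cutOf ends X).card + (cutOf ends Y).card := by
  simp only [cutOf, _root_.btw, card_filter, mul_sum, ← sum_add_distrib]
  refine sum_congr rfl fun e _ => ?_
  have hXY := disjoint_left.mp hXY
  simp only [mem_union]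
  by_cases h1X : (ends e).1 ∈ X <;> by_cases h1Y : (ends e).1 ∈ Y <;>
    by_cases h2X : (ends e).2 ∈ X <;> by_cases h2Y : (ends e).2 ∈ Y <;>
    simp_all [Xor]

theorem two_mul_card_btw_eq_of_card_cutOf_eq {X Y : Finset V} {q : ℕ} (hXY : Disjoint X Y)
    (hX : (cutOf ends X).card = q) (hY : (cutOf ends Y).card = q)
    (hXY' : (cutOf ends (X ∪ Y)).card = q) : 2 * (btw ends X Y).card = q := by
  have := card_cutOf_union_add_two_mul_card_btw ends hXY
  omega

end Cuts

theorem stmt19_general [Fintype V] [Fintype E] [DecidableEq V]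
    (p : ℕ) (ends : E → V × V)
    (A B : Finset V)
    (hA : (cutOf ends A).card = p + 2) (hB : (cutOf ends B).card = p + 2)
    (h1 : (cutOf ends (A ∪ B)).card = p + 2) (h2 : (cutOf ends (A ∩ B)).card = p + 2)
    (h3 : (cutOf ends (A \ B)).card = p + 2) (h4 : (cutOf ends (B \ A)).card = p + 2) :
    (btw ends (A \ B) (B \ A)).card = 0 ∧
    (btw ends (A ∩ B) (A ∪ B)ᶜ).card = 0 ∧
    (btw ends (A ∩ B) (A \ B)).card = (p + 2) / 2 ∧
    (btw ends (A ∩ B) (B \ A)).card = (p + 2) / 2 ∧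
    (btw ends (A \ B) (A ∪ B)ᶜ).card = (p + 2) / 2 ∧
    (btw ends (B \ A) (A ∪ B)ᶜ).card = (p + 2) / 2 := by
  have hIP : A ∩ B ∪ A \ B = A := by ext; simp; tauto
  have hIQ : A ∩ B ∪ B \ A = B := by ext; simp; tauto
  have hPW : A \ B ∪ (A ∪ B)ᶜ = Bᶜ := by ext; simp; tauto
  have hQW : B \ A ∪ (A ∪ B)ᶜ = Aᶜ := by ext; simp; tauto
  have hAW : A ∪ (A ∪ B)ᶜ = (B \ A)ᶜ := by ext; simp; tauto
  have hW : (cutOf ends (A ∪ B)ᶜ).card = p + 2 := by rw [cutOf_compl, h1]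
  have eIP := two_mul_card_btw_eq_of_card_cutOf_eq ends
    (disjoint_left.2 (by simp +contextual)) h2 h3 (by rwa [hIP])
  have eIQ := two_mul_card_btw_eq_of_card_cutOf_eq ends
    (disjoint_left.2 (by simp +contextual)) h2 h4 (by rwa [hIQ])
  have ePW := two_mul_card_btw_eq_of_card_cutOf_eq ends
    (disjoint_left.2 (by simp +contextual)) h3 hW (by rwa [hPW, cutOf_compl])
  have eQW := two_mul_card_btw_eq_of_card_cutOf_eq ends
    (disjoint_left.2 (by simp +contextual)) h4 hW (by rwa [hQW, cutOf_compl])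
  have eAQ := two_mul_card_btw_eq_of_card_cutOf_eq ends
    (disjoint_left.2 (by simp +contextual)) hA h4 (by rwa [union_sdiff_self_eq_union])
  have eAW := two_mul_card_btw_eq_of_card_cutOf_eq ends
    (disjoint_left.2 (by simp +contextual)) hA hW (by rwa [hAW, cutOf_compl])
  have splitQ : (btw ends A (B \ A)).card =
      (btw ends (A ∩ B) (B \ A)).card + (btw ends (A \ B) (B \ A)).card := by
    rw [← card_btw_union_left ends (disjoint_left.2 (by simp +contextual))
      (by rw [hIP]; exact disjoint_left.2 (by simp +contextual)), hIP]
  have splitW : (btw ends A (A ∪ B)ᶜ).card =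
      (btw ends (A ∩ B) (A ∪ B)ᶜ).card + (btw ends (A \ B) (A ∪ B)ᶜ).card := by
    rw [← card_btw_union_left ends (disjoint_left.2 (by simp +contextual))
      (by rw [hIP]; exact disjoint_left.2 (by simp +contextual)), hIP]
  -- with the cut hypotheses in context `omega` stalls comparing their atoms up to unfolding
  clear * - eIP eIQ ePW eQW eAQ eAW splitQ splitW
  omega

theorem stmt19 [Fintype V] [Fintype E] [DecidableEq V] [DecidableEq E]
    (p : ℕ) (ends : E → V × V)
    (hconn : ∀ S : Finset V, S.Nonempty → S ≠ Finset.univ → p ≤ (cutOf ends S).card)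
    (A B : Finset V) (hcross : crosses A B)
    (hA : (cutOf ends A).card = p + 2) (hB : (cutOf ends B).card = p + 2)
    (h1 : (cutOf ends (A ∪ B)).card = p + 2) (h2 : (cutOf ends (A ∩ B)).card = p + 2)
    (h3 : (cutOf ends (A \ B)).card = p + 2) (h4 : (cutOf ends (B \ A)).card = p + 2) :
    (btw ends (A \ B) (B \ A)).card = 0 ∧
    (btw ends (A ∩ B) (A ∪ B)ᶜ).card = 0 ∧
    (btw ends (A ∩ B) (A \ B)).card = (p + 2) / 2 ∧
    (btw ends (A ∩ B) (B \ A)).card = (p + 2) / 2 ∧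
    (btw ends (A \ B) (A ∪ B)ᶜ).card = (p + 2) / 2 ∧
    (btw ends (B \ A) (A ∪ B)ᶜ).card = (p + 2) / 2 :=
  stmt19_general p ends A B hA hB h1 h2 h3 h4
end
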